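/- Let G be a group acting on a type Z. The category of functors from the one-object groupoid with endomorphism monoid ℤ (i.e. the groupoid model of the circle S¹ = Bℤ) to the action groupoid Z//G is equivalent to the action groupoid of G acting on the set {(z,g) ∈ Z × G | g • z = z} of points together with an element of their stabilizer, where G acts by h • (z,g) = (h • z, h g h⁻¹). (This is the 1-categorical content of the paper's description of the loop space of a global quotient: 𝓛(Z/G) ≃ {z ∈ Z, g ∈ G_z}/G.) -/

import Mathlib

open CategoryTheory

/-- The set of pairs `(z, g)` where `g` lies in the stabilizer of `z`:
the "loop points" of the quotient `Z/G`. -/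
def LoopPoints (G : Type*) [Group G] (Z : Type*) [MulAction G Z] : Type _ :=
  {p : Z × G // p.2 • p.1 = p.1}

/-- `G` acts on loop points by `h • (z, g) = (h • z, h * g * h⁻¹)`. -/
instance LoopPoints.instSMul (G : Type*) [Group G] (Z : Type*) [MulAction G Z] :
    SMul G (LoopPoints G Z) :=
  ⟨fun h p => ⟨(h • p.1.1, h * p.1.2 * h⁻¹), by
    rw [smul_smul, inv_mul_cancel_right, mul_smul, p.2]⟩⟩

@[simp] lemma LoopPoints.smul_val {G : Type*} [Group G] {Z : Type*} [MulAction G Z]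
    (h : G) (p : LoopPoints G Z) :
    (h • p).1 = (h • p.1.1, h * p.1.2 * h⁻¹) :=
  rfl

instance LoopPoints.mulAction (G : Type*) [Group G] (Z : Type*) [MulAction G Z] :
    MulAction G (LoopPoints G Z) where
  one_smul p := by
    apply Subtype.ext
    simp
  mul_smul h₁ h₂ p := by
    apply Subtype.ext
    rw [LoopPoints.smul_val, LoopPoints.smul_val, LoopPoints.smul_val]
    apply Prod.ext <;> simp [mul_smul, mul_assoc]

namespace LoopProofAux

variable {G : Type*} [Group G] {Z : Type*} [MulAction G Z]

def valHom (p : ActionCategory G Z) : End p →* G where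
  toFun f := f.val
  map_one' := rfl
  map_mul' _ _ := rfl

def e1 : SingleObj.star (Multiplicative ℤ) ⟶ SingleObj.star (Multiplicative ℤ) :=
  Multiplicative.ofAdd 1

lemma map_val (M : SingleObj (Multiplicative ℤ) ⥤ ActionCategory G Z)
    (n : SingleObj.star (Multiplicative ℤ) ⟶ SingleObj.star (Multiplicative ℤ)) :
    (M.map n).val = (M.map e1).val ^ (Multiplicative.toAdd (n : Multiplicative ℤ)) := by
  have : (valHom _).comp ((M.mapEnd (SingleObj.star _)).comp
      (SingleObj.toEnd (Multiplicative ℤ)).toMonoidHom) = zpowersHom G (M.map e1).val := by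
    apply MonoidHom.ext_mint
    simp only [MonoidHom.comp_apply, zpowersHom_apply, toAdd_ofAdd, zpow_one]
    rfl
  have h := congrFun (congrArg (fun f => f.toFun) this) n
  exact h

def fwd : (SingleObj (Multiplicative ℤ) ⥤ ActionCategory G Z) ⥤
    ActionCategory G (LoopPoints G Z) where
  obj M := ActionCategory.objEquiv G (LoopPoints G Z)
    ⟨((M.obj (SingleObj.star _)).back, (M.map e1).val), (M.map e1).property⟩
  map {M N} η := ⟨(η.app (SingleObj.star _)).val, by
    apply Subtype.ext
    apply Prod.ext
    · exact (η.app (SingleObj.star _)).property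
    · have hv := (congrArg Subtype.val (η.naturality e1)).symm
      show (η.app (SingleObj.star _)).val * (M.map e1).val *
          (η.app (SingleObj.star _)).val⁻¹ = (N.map e1).val
      have hv' : (N.map e1).val * (η.app (SingleObj.star _)).val
          = (η.app (SingleObj.star _)).val * (M.map e1).val := hv
      rw [← hv']
      group⟩
  map_id M := rfl
  map_comp f g := rfl

def ept (p : LoopPoints G Z) : @End (ActionCategory G Z) _ (↑p.1.1) :=
  ⟨p.1.2, p.2⟩

def bwdObj (p : LoopPoints G Z) : SingleObj (Multiplicative ℤ) ⥤ ActionCategory G Z :=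
  SingleObj.functor (@zpowersHom _ (CategoryTheory.End.group (C := ActionCategory G Z) _) (ept p))

lemma bwdObj_map_val (p : LoopPoints G Z)
    (n : SingleObj.star (Multiplicative ℤ) ⟶ SingleObj.star (Multiplicative ℤ)) :
    ((bwdObj p).map n).val = p.1.2 ^ (Multiplicative.toAdd (n : Multiplicative ℤ)) := by
  show ((@zpowersHom _ (CategoryTheory.End.group (C := ActionCategory G Z) _) (ept p)) n).val = _
  erw [zpowersHom_apply]
  have := @MonoidHom.map_zpow _ _ (CategoryTheory.End.group (C := ActionCategory G Z) _) _
    (valHom (↑p.1.1 : ActionCategory G Z)) (ept p)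
    (Multiplicative.toAdd (n : Multiplicative ℤ))
  exact this

lemma eqToHom_val {p q : ActionCategory G Z} (h : p = q) : (eqToHom h).val = 1 := by
  subst h; rfl

lemma eqToHom_val' {p q : ActionCategory G (LoopPoints G Z)} (h : p = q) :
    (eqToHom h).val = 1 := by
  subst h; rfl

def bwdHom {p q : ActionCategory G (LoopPoints G Z)} (f : p ⟶ q) :
    (bwdObj p.back).obj (SingleObj.star _) ⟶ (bwdObj q.back).obj (SingleObj.star _) :=
  ⟨f.val, congrArg (fun x : LoopPoints G Z => x.1.1) f.property⟩

def bwd : ActionCategory G (LoopPoints G Z) ⥤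
    (SingleObj (Multiplicative ℤ) ⥤ ActionCategory G Z) where
  obj p := bwdObj p.back
  map {p q} f := SingleObj.natTrans (bwdHom f)
    (by
      intro a
      apply Subtype.ext
      show f.val * ((bwdObj p.back).map a).val = ((bwdObj q.back).map a).val * f.val
      rw [bwdObj_map_val, bwdObj_map_val]
      have hq : q.back.1.2 = f.val * p.back.1.2 * f.val⁻¹ :=
        (congrArg (fun x : LoopPoints G Z => x.1.2) f.property).symm
      rw [hq, conj_zpow]
      group)
  map_id p := by
    ext
    apply Subtype.ext
    rfl
  map_comp f g := by
    ext
    apply Subtype.ext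
    rfl

lemma fwd_obj_bwd_obj (p : ActionCategory G (LoopPoints G Z)) :
    (bwd ⋙ fwd).obj p = p := by
  have h1 : ((((bwdObj p.back).obj (SingleObj.star _)).back,
      ((bwdObj p.back).map e1).val)) = p.back.1 := by
    apply Prod.ext
    · rfl
    · show ((bwdObj p.back).map e1).val = p.back.1.2
      rw [bwdObj_map_val]
      simp [e1]
  have h2 : (⟨(((bwdObj p.back).obj (SingleObj.star _)).back,
      ((bwdObj p.back).map e1).val), ((bwdObj p.back).map e1).property⟩ : LoopPoints G Z)
      = p.back := Subtype.ext h1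
  exact (congrArg (ActionCategory.objEquiv G (LoopPoints G Z)) h2).trans
    (ActionCategory.back_coe p)

lemma bwd_obj_fwd_obj (M : SingleObj (Multiplicative ℤ) ⥤ ActionCategory G Z)
    (x : SingleObj (Multiplicative ℤ)) :
    M.obj x = ((fwd ⋙ bwd).obj M).obj x :=
  (ActionCategory.back_coe (M.obj x)).symm

def theEquiv : (SingleObj (Multiplicative ℤ) ⥤ ActionCategory G Z) ≌
    ActionCategory G (LoopPoints G Z) :=
  CategoryTheory.Equivalence.mk fwd bwd
    (NatIso.ofComponents
      (fun M => NatIso.ofComponents (fun x => eqToIso (bwd_obj_fwd_obj M x))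
        (by
          intro x y f
          apply Subtype.ext
          simp only [eqToIso.hom, ActionCategory.comp_val, eqToHom_val,
            Functor.comp_map, one_mul, mul_one]
          exact (map_val M f).trans (bwdObj_map_val
            ⟨((M.obj (SingleObj.star _)).back, (M.map e1).val), (M.map e1).property⟩ f).symm))
      (by
        intro M N η
        ext x
        apply Subtype.ext
        simp only [NatTrans.comp_app, NatIso.ofComponents_hom_app, eqToIso.hom,
          Functor.id_map, Functor.comp_map, ActionCategory.comp_val, eqToHom_val,
          one_mul, mul_one]
        erw [eqToHom_val, one_mul, mul_one]
        swap; rfl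
        rfl))
    (NatIso.ofComponents (fun p => eqToIso (fwd_obj_bwd_obj p))
      (by
        intro p q f
        apply Subtype.ext
        simp only [eqToIso.hom, Functor.id_map, Functor.comp_map,
          ActionCategory.comp_val, eqToHom_val', one_mul, mul_one]
        rfl))

end LoopProofAux

/-- The category of functors from the one-object groupoid on `ℤ` (the groupoid
model of the circle `S¹ = Bℤ`) to the action groupoid `Z//G` is equivalent to
the action groupoid of `G` acting on `{(z, g) | g • z = z}` by
`h • (z, g) = (h • z, h * g * h⁻¹)`. -/
theorem loop_space_of_global_quotient (G : Type*) [Group G] (Z : Type*) [MulAction G Z] :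
    Nonempty ((SingleObj (Multiplicative ℤ) ⥤ ActionCategory G Z) ≌
      ActionCategory G (LoopPoints G Z)) := by
  exact ⟨LoopProofAux.theEquiv⟩
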